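/- Let TS=(S,T,→,s₀) be a CEST-system and N=(P,T⊎T̄,F,M₀) a PT-net such that (TS^spike)^rev ◁ CRG_N ◁ TS^mixrev and TS ≅ CRG_{N|_T}, where N|_T is the subnet of N induced by the actions T. Then TS^mixrev is solvable. -/

import Mathlib

/-! Common formalization of step transition systems, CEST-systems,
reversing constructions, PT-nets, and solvability. -/

structure STS (S : Type*) (A : Type*) where
  T : Finset A
  tr : S → Multiset A → S → Prop
  init : S

namespace STS

variable {S S' : Type*} {A : Type*}

/-- All transition labels are multisets over the action set `T`. -/
def LabelsIn (X : STS S A) : Prop :=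
  ∀ s (α : Multiset A) s', X.tr s α s' → ∀ a ∈ α, a ∈ X.T

/-- The integer action vector of a step. -/
def stepVec [DecidableEq A] (α : Multiset A) : A → ℤ :=
  fun a => (α.count a : ℤ)

/-- `PathSig X s r v` holds iff there is an undirected path from `s` to `r`
with signature `v`. -/
inductive PathSig [DecidableEq A] (X : STS S A) : S → S → (A → ℤ) → Prop
  | nil (s : S) : PathSig X s s 0
  | fwd {s r r' : S} {α : Multiset A} {v : A → ℤ} :
      PathSig X s r v → X.tr r α r' → PathSig X s r' (v + stepVec α)
  | bwd {s r r' : S} {α : Multiset A} {v : A → ℤ} :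
      PathSig X s r v → X.tr r' α r → PathSig X s r' (v - stepVec α)

/-- The least addition-closed equivalence relating signatures of any two
undirected paths with the same source and target. -/
inductive Bowtie [DecidableEq A] (X : STS S A) : (A → ℤ) → (A → ℤ) → Prop
  | base {s r : S} {v w : A → ℤ} :
      PathSig X s r v → PathSig X s r w → Bowtie X v w
  | refl (v : A → ℤ) : Bowtie X v v
  | symm {v w : A → ℤ} : Bowtie X v w → Bowtie X w v
  | trans {u v w : A → ℤ} : Bowtie X u v → Bowtie X v w → Bowtie X u w
  | add {v w v' w' : A → ℤ} :
      Bowtie X v w → Bowtie X v' w' → Bowtie X (v + v') (w + w')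

/-- Constant effect. -/
def CE [DecidableEq A] (X : STS S A) : Prop :=
  ∀ (s r r' : S) (v w : A → ℤ),
    PathSig X s r v → PathSig X s r' w → Bowtie X v w → r = r'

/-- Reachability by forward transitions. -/
inductive ReachFrom (X : STS S A) : S → S → Prop
  | refl (s : S) : ReachFrom X s s
  | step {s r r' : S} {α : Multiset A} :
      ReachFrom X s r → X.tr r α r' → ReachFrom X s r'

/-- Every state is reachable from the initial state. -/
def REA (X : STS S A) : Prop := ∀ s, X.ReachFrom X.init s

/-- Empty loops. -/
def EL (X : STS S A) : Prop := ∀ s, X.tr s 0 s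

/-- Sequentialisability. -/
def SEQ (X : STS S A) : Prop :=
  ∀ (s : S) (α β : Multiset A), (∃ s', X.tr s (α + β) s') →
    ∃ s', X.tr s α s' ∧ ∃ s'', X.tr s' β s''

/-- A CEST-system: a step transition system satisfying CE, REA, EL and SEQ. -/
def IsCEST [DecidableEq A] (X : STS S A) : Prop :=
  X.LabelsIn ∧ X.CE ∧ X.REA ∧ X.EL ∧ X.SEQ

/-- Step-finiteness: at every state only finitely many steps are enabled. -/
def StepFinite (X : STS S A) : Prop :=
  ∀ s, {α : Multiset A | ∃ s', X.tr s α s'}.Finite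

/-- Retain only transitions whose label has size at most 1. -/
def seqR (X : STS S A) : STS S A :=
  { X with tr := fun s α s' => X.tr s α s' ∧ Multiset.card α ≤ 1 }

/-- Retain only transitions whose label is a set. -/
def setR (X : STS S A) : STS S A :=
  { X with tr := fun s α s' => X.tr s α s' ∧ α.Nodup }

/-- Retain only transitions whose label has support of size at most 1. -/
def spikeR [DecidableEq A] (X : STS S A) : STS S A :=
  { X with tr := fun s α s' => X.tr s α s' ∧ α.toFinset.card ≤ 1 }

variable [DecidableEq A]

/-- `bar` is a proper reversing map for the actions of `X`: reverses are
pairwise distinct and fresh. -/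
def GoodRev (X : STS S A) (bar : A → A) : Prop :=
  Set.InjOn bar ↑X.T ∧ ∀ a ∈ X.T, bar a ∉ X.T

/-- The action set `T ⊎ T̄`. -/
def revT (X : STS S A) (bar : A → A) : Finset A := X.T ∪ X.T.image bar

/-- The direct reverse `TS^rev` (in a CEST-system, `s –α→ s'` means `s' = s⊕α`). -/
def revSTS (X : STS S A) (bar : A → A) : STS S A where
  T := revT X bar
  tr s γ s' := X.tr s γ s' ∨ ∃ α : Multiset A, γ = Multiset.map bar α ∧ X.tr s' α s
  init := X.init

/-- The set reverse `TS^setrev`. -/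
def setrevSTS (X : STS S A) (bar : A → A) : STS S A where
  T := revT X bar
  tr s γ s' := X.tr s γ s' ∨
    ∃ α : Multiset A, γ = Multiset.map bar α ∧ α.Nodup ∧ X.tr s' α s
  init := X.init

/-- The mixed reverse `TS^mixrev`: transitions `(s⊕α, ᾱ+β, s⊕β)` for `s –(α+β)→`. -/
def mixrevSTS (X : STS S A) (bar : A → A) : STS S A where
  T := revT X bar
  tr u γ v := ∃ (s : S) (α β : Multiset A),
      γ = Multiset.map bar α + β ∧ (∃ w, X.tr s (α + β) w) ∧
      X.tr s α u ∧ X.tr s β v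
  init := X.init

/-- `Y` is a split reverse of `X` (w.r.t. reversing map `bar` and the
index-removing map `noidx`). -/
def IsSplitRev (X : STS S A) (bar noidx : A → A) (Y : STS S A) : Prop :=
  Y.init = X.init ∧
  Y.LabelsIn ∧
  X.T ⊆ Y.T ∧
  (∀ a ∈ X.T, noidx a = a) ∧
  Disjoint X.T ((Y.T \ X.T).image noidx) ∧
  Y.SEQ ∧
  Y.T.image noidx = revT X bar ∧
  ∀ (s : S) (γ : Multiset A) (s' : S),
    (∃ δ : Multiset A, Y.tr s δ s' ∧ γ = Multiset.map noidx δ) ↔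
      (revSTS X bar).tr s γ s'

/-- Inclusion with the identity map on states (`⊴`). -/
def SubId (X Y : STS S A) : Prop :=
  X.init = Y.init ∧ X.T ⊆ Y.T ∧
  ∀ s (α : Multiset A) s', X.tr s α s' → Y.tr s α s'

/-- Inclusion (`◁`) via a bijection of states. -/
def Incl (X : STS S A) (Y : STS S' A) : Prop :=
  ∃ ψ : S ≃ S', ψ X.init = Y.init ∧ X.T ⊆ Y.T ∧
    ∀ s (α : Multiset A) s', X.tr s α s' → Y.tr (ψ s) α (ψ s')

/-- Isomorphism of step transition systems. -/
def IsoSTS (X : STS S A) (Y : STS S' A) : Prop :=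
  ∃ ψ : S ≃ S', ψ X.init = Y.init ∧ X.T = Y.T ∧
    ∀ s (α : Multiset A) s', X.tr s α s' ↔ Y.tr (ψ s) α (ψ s')

/-- `TS̄_r`: the reversed system restricted to the states from which `r` is
reachable in `X`, with initial state `r`. -/
def revRestrict (X : STS S A) (bar : A → A) (r : S) :
    STS {s : S // X.ReachFrom s r} A where
  T := X.T.image bar
  tr u γ v := ∃ α : Multiset A, γ = Multiset.map bar α ∧ X.tr v.1 α u.1
  init := ⟨r, ReachFrom.refl r⟩

end STS

/-- A place/transition net. -/
structure PTNet (P : Type*) (A : Type*) where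
  T : Finset A
  pre : P → A → ℕ
  post : A → P → ℕ
  M0 : P → ℕ
  pre_pos : ∀ a ∈ T, ∃ p, 0 < pre p a

namespace PTNet

variable {P A : Type*}

def PRE (N : PTNet P A) (α : Multiset A) (p : P) : ℕ :=
  (α.map fun a => N.pre p a).sum

def POST (N : PTNet P A) (α : Multiset A) (p : P) : ℕ :=
  (α.map fun a => N.post a p).sum

def Enabled (N : PTNet P A) (M : P → ℕ) (α : Multiset A) : Prop :=
  (∀ a ∈ α, a ∈ N.T) ∧ ∀ p, N.PRE α p ≤ M p

def fire (N : PTNet P A) (M : P → ℕ) (α : Multiset A) : P → ℕ :=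
  fun p => M p - N.PRE α p + N.POST α p

inductive Reach (N : PTNet P A) : (P → ℕ) → Prop
  | init : Reach N N.M0
  | step {M : P → ℕ} {α : Multiset A} :
      Reach N M → N.Enabled M α → Reach N (N.fire M α)

/-- The subnet induced by a set of actions (same places, same marking). -/
def restrict [DecidableEq A] (N : PTNet P A) (T' : Finset A) : PTNet P A where
  T := N.T ∩ T'
  pre := N.pre
  post := N.post
  M0 := N.M0
  pre_pos := fun a ha => N.pre_pos a (Finset.mem_of_mem_inter_left ha)

end PTNet

/-- The concurrent reachability graph of a PT-net. -/
def CRG {P A : Type*} (N : PTNet P A) : STS {M : P → ℕ // N.Reach M} A where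
  T := N.T
  tr M α M' := N.Enabled M.1 α ∧ M'.1 = N.fire M.1 α
  init := ⟨N.M0, PTNet.Reach.init⟩

/-- A step transition system is solvable if it is isomorphic to the
concurrent reachability graph of some PT-net. -/
def STSSolvable {S A : Type*} (X : STS S A) : Prop :=
  ∃ (n : ℕ) (N : PTNet (Fin n) A), STS.IsoSTS X (CRG N)

/-- An unmarked PT-net. -/
structure UPTNet (P : Type*) (A : Type*) where
  T : Finset A
  pre : P → A → ℕ
  post : A → P → ℕ
  pre_pos : ∀ a ∈ T, ∃ p, 0 < pre p a

def UPTNet.withM {P A : Type*} (U : UPTNet P A) (M : P → ℕ) : PTNet P A :=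
  ⟨U.T, U.pre, U.post, M, U.pre_pos⟩

/-- Solvability of the reversed system `TS̄` with multiple initial states `R`:
one unmarked PT-net and one map `ψ` solving each `TS̄_r` via `ψ(r)` as the
initial marking. -/
def RevMultiSolvable {S A : Type*} [DecidableEq A] (X : STS S A) (bar : A → A)
    (R : Set S) : Prop :=
  ∃ (n : ℕ) (U : UPTNet (Fin n) A) (ψ : S → Fin n → ℕ),
    ∀ r ∈ R,
      ∃ e : {s : S // X.ReachFrom s r} ≃
              {M : Fin n → ℕ // (U.withM (ψ r)).Reach M},
        (∀ s, (e s).1 = ψ s.1) ∧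
        (X.revRestrict bar r).T = (CRG (U.withM (ψ r))).T ∧
        ∀ s (α : Multiset A) s',
          (X.revRestrict bar r).tr s α s' ↔ (CRG (U.withM (ψ r))).tr (e s) α (e s')

/-- A PT-net with weighted read arcs. -/
structure PTRNet (P : Type*) (A : Type*) where
  T : Finset A
  pre : P → A → ℕ
  post : A → P → ℕ
  read : P → A → Option ℕ
  M0 : P → ℕ
  pre_pos : ∀ a ∈ T, ∃ p, 0 < pre p a

namespace PTRNet

variable {P A : Type*}

def toPTNet (N : PTRNet P A) : PTNet P A := ⟨N.T, N.pre, N.post, N.M0, N.pre_pos⟩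

def Enabled (N : PTRNet P A) (M : P → ℕ) (α : Multiset A) : Prop :=
  N.toPTNet.Enabled M α ∧ ∀ a ∈ α, ∀ p k, N.read p a = some k → M p = k

inductive Reach (N : PTRNet P A) : (P → ℕ) → Prop
  | init : Reach N N.M0
  | step {M : P → ℕ} {α : Multiset A} :
      Reach N M → N.Enabled M α → Reach N (N.toPTNet.fire M α)

end PTRNet

/-- The concurrent reachability graph of a PTR-net. -/
def PTRCRG {P A : Type*} (N : PTRNet P A) : STS {M : P → ℕ // N.Reach M} A where
  T := N.T
  tr M α M' := N.Enabled M.1 α ∧ M'.1 = N.toPTNet.fire M.1 α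
  init := ⟨N.M0, PTRNet.Reach.init⟩

/-!
States of `X` are marked as in `N|_T`. The solving net keeps a copy of every place `p` of `N`, on
which `ā` acts as the exact reverse of `a`, and adds a place `(p, a)` for every `a ∈ T`, on which
`ā` keeps its weights from `N` while every other action moves only the tokens of its net effect.

A mixed-reverse step `ᾱ + β` out of `s ⊕ α` is enabled on `(p, a)` because, in `X`, one can run the
actions of `α + β` that lose tokens on `p` and then the spike `a^k` of `α`, and reversing a spike
is allowed in `N`. Conversely an enabled `ᾱ + β` is peeled off one `ā` at a time: the place
`(p, a)` enables `ā` in `N`, and `CRG N ◁ X^mixrev` turns that into an `a`-step of `X` entering the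
current state. Once `α` is undone, `α + β` is enabled in `N|_T`, hence a step of `X`.
-/

namespace STS

variable {S A : Type*} {X : STS S A} {s t t' u v w : S} {α β : Multiset A}

theorem GoodRev.ne_bar {bar : A → A} (hg : X.GoodRev bar) {a b : A} (hb : b ∈ X.T)
    (ha : a ∈ X.T) : b ≠ bar a :=
  fun h => hg.2 a ha (h ▸ hb)

section CE

variable [DecidableEq A]

@[simp]
theorem stepVec_zero : stepVec (0 : Multiset A) = 0 := by
  funext a; simp [stepVec]

@[simp]
theorem stepVec_add (α β : Multiset A) : stepVec (α + β) = stepVec α + stepVec β := by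
  funext a; simp [stepVec]

theorem CE.eq_of_pathSig (hCE : X.CE) {r r' : S} {x : A → ℤ} (h : PathSig X s r x)
    (h' : PathSig X s r' x) : r = r' :=
  hCE s r r' x x h h' (Bowtie.refl x)

theorem CE.eq_of_tr_of_tr (hCE : X.CE) (h : X.tr s α t) (h' : X.tr s α t') : t = t' :=
  hCE.eq_of_pathSig ((PathSig.nil s).fwd h) ((PathSig.nil s).fwd h')

theorem CE.eq_of_tr_zero (hCE : X.CE) (h : X.tr s 0 t) : t = s :=
  hCE.eq_of_pathSig (by simpa using (PathSig.nil s).fwd h) (PathSig.nil s)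

theorem CE.eq_of_tr_add (hCE : X.CE) (h : X.tr s (α + β) w) (hα : X.tr s α t)
    (hβ : X.tr t β t') : t' = w :=
  hCE.eq_of_pathSig (by simpa [add_assoc] using ((PathSig.nil s).fwd hα).fwd hβ)
    ((PathSig.nil s).fwd h)

theorem CE.split (hCE : X.CE) (hSEQ : X.SEQ) (h : X.tr s (α + β) w) :
    ∃ t, X.tr s α t ∧ X.tr t β w := by
  obtain ⟨t, hα, t', hβ⟩ := hSEQ s α β ⟨w, h⟩
  exact ⟨t, hα, hCE.eq_of_tr_add h hα hβ ▸ hβ⟩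

theorem CE.exists_tr_singleton_of_mem (hCE : X.CE) (hSEQ : X.SEQ) {a : A}
    (h : X.tr s α u) (ha : a ∈ α) : ∃ t t', X.tr t {a} t' := by
  obtain ⟨β, rfl⟩ := Multiset.exists_cons_of_mem ha
  obtain ⟨t, ht, -⟩ := hCE.split hSEQ (Multiset.singleton_add a β ▸ h)
  exact ⟨s, t, ht⟩

theorem CE.induction_singleton (hCE : X.CE) (hSEQ : X.SEQ) (hREA : X.REA)
    {motive : S → Prop} (init : motive X.init)
    (step : ∀ t (a : A) t', motive t → X.tr t {a} t' → motive t') (s : S) : motive s := by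
  have along : ∀ (α : Multiset A) t t', motive t → X.tr t α t' → motive t' := by
    intro α
    induction α using Multiset.induction with
    | empty => intro t t' ht h; rwa [hCE.eq_of_tr_zero h]
    | cons a α ih =>
      intro t t' ht h
      obtain ⟨t₁, h₁, h₂⟩ := hCE.split hSEQ (Multiset.singleton_add a α ▸ h)
      exact ih t₁ t' (step t a t₁ ht h₁) h₂
  induction hREA s with
  | refl => exact init
  | step _ h ih => exact along _ _ _ ih h

end CE

section Mixrev

variable [DecidableEq A] {bar : A → A} {a : A}

/-- A left inverse of `bar` on `X.T`; its value off `bar '' X.T` is irrelevant. -/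
noncomputable def unbar (X : STS S A) (bar : A → A) (x : A) : A :=
  if h : ∃ a ∈ X.T, bar a = x then h.choose else x

theorem unbar_spec {x : A} (h : ∃ a ∈ X.T, bar a = x) :
    X.unbar bar x ∈ X.T ∧ bar (X.unbar bar x) = x := by
  rw [unbar, dif_pos h]
  exact h.choose_spec

theorem unbar_bar (hinj : Set.InjOn bar X.T) (ha : a ∈ X.T) : X.unbar bar (bar a) = a :=
  have h := unbar_spec (X := X) ⟨a, ha, rfl⟩
  hinj h.1 ha h.2

theorem mixrevSTS_tr_of_tr (hEL : X.EL) (h : X.tr s β v) : (X.mixrevSTS bar).tr s β v :=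
  ⟨s, 0, β, by simp, ⟨v, by simpa using h⟩, hEL s, h⟩

theorem mixrevSTS_REA (hREA : X.REA) (hEL : X.EL) : (X.mixrevSTS bar).REA := fun s => by
  induction hREA s with
  | refl => exact ReachFrom.refl _
  | step _ h ih => exact ih.step (mixrevSTS_tr_of_tr hEL h)

theorem tr_of_mixrevSTS_tr_singleton (hLab : X.LabelsIn) (hCE : X.CE) (hg : X.GoodRev bar)
    (ha : a ∈ X.T) (h : (X.mixrevSTS bar).tr u {a} v) : X.tr u {a} v := by
  obtain ⟨s, α, β, hγ, -, hα, hβ⟩ := h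
  obtain rfl : α = 0 := Multiset.eq_zero_of_forall_notMem fun b hb => by
    have : bar b ∈ ({a} : Multiset A) :=
      hγ ▸ Multiset.mem_add.2 (.inl (Multiset.mem_map_of_mem _ hb))
    exact hg.2 b (hLab _ _ _ hα b hb) (Multiset.mem_singleton.1 this ▸ ha)
  rw [Multiset.map_zero, zero_add] at hγ
  subst hγ
  rwa [hCE.eq_of_tr_zero hα]

theorem exists_tr_singleton_of_mixrevSTS_tr_bar (hLab : X.LabelsIn) (hg : X.GoodRev bar)
    (ha : a ∈ X.T) (h : (X.mixrevSTS bar).tr u {bar a} v) : ∃ t, X.tr t {a} u := by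
  obtain ⟨s, α, β, hγ, -, hα, hβ⟩ := h
  obtain rfl : β = 0 := Multiset.eq_zero_of_forall_notMem fun b hb => by
    have : b ∈ ({bar a} : Multiset A) := hγ ▸ Multiset.mem_add.2 (.inr hb)
    exact hg.2 a ha (Multiset.mem_singleton.1 this ▸ hLab _ _ _ hβ b hb)
  obtain ⟨c, rfl, hc⟩ := Multiset.map_eq_singleton.1 (add_zero (Multiset.map bar α) ▸ hγ.symm)
  obtain rfl : c = a := hg.1 (hLab _ _ _ hα c (Multiset.mem_singleton_self c)) ha hc
  exact ⟨s, hα⟩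

theorem exists_eq_map_bar_add {γ : Multiset A} (hγ : ∀ x ∈ γ, x ∈ X.revT bar) :
    ∃ α β : Multiset A, γ = α.map bar + β ∧ (∀ b ∈ α, b ∈ X.T) ∧ ∀ b ∈ β, b ∈ X.T := by
  have hrev : ∀ x ∈ γ.filter (· ∉ X.T), ∃ a ∈ X.T, bar a = x := fun x hx => by
    rw [Multiset.mem_filter] at hx
    simpa [hx.2, revT] using hγ x hx.1
  refine ⟨(γ.filter (· ∉ X.T)).map (X.unbar bar), γ.filter (· ∈ X.T), ?_, ?_, ?_⟩
  · rw [Multiset.map_map, Multiset.map_congr rfl (f := bar ∘ X.unbar bar) (g := id)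
      fun x hx => (unbar_spec (hrev x hx)).2, Multiset.map_id, add_comm, Multiset.filter_add_not]
  · simp only [Multiset.mem_map]
    rintro _ ⟨x, hx, rfl⟩
    exact (unbar_spec (hrev x hx)).1
  · exact fun b hb => (Multiset.mem_filter.1 hb).2

end Mixrev

end STS

namespace PTNet

variable {P Q A : Type*} (N : PTNet P A) {M : P → ℕ} {α β : Multiset A} {p : P}

@[simp]
theorem PRE_zero : N.PRE 0 = 0 := by
  funext p; simp [PRE]

@[simp]
theorem PRE_add (α β : Multiset A) (p : P) : N.PRE (α + β) p = N.PRE α p + N.PRE β p := by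
  simp [PRE]

@[simp]
theorem PRE_cons (a : A) (α : Multiset A) (p : P) :
    N.PRE (a ::ₘ α) p = N.pre p a + N.PRE α p := by
  simp [PRE]

@[simp]
theorem PRE_singleton (a : A) (p : P) : N.PRE {a} p = N.pre p a := by
  simp [PRE]

@[simp]
theorem PRE_replicate (k : ℕ) (a : A) (p : P) :
    N.PRE (Multiset.replicate k a) p = k * N.pre p a := by
  simp [PRE]

def eff (α : Multiset A) (p : P) : ℤ := (α.map fun x => (N.post x p : ℤ) - N.pre p x).sum

@[simp]
theorem eff_zero (p : P) : N.eff 0 p = 0 := by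
  simp [eff]

@[simp]
theorem eff_add (α β : Multiset A) (p : P) : N.eff (α + β) p = N.eff α p + N.eff β p := by
  simp [eff]

@[simp]
theorem eff_cons (a : A) (α : Multiset A) (p : P) :
    N.eff (a ::ₘ α) p = N.eff {a} p + N.eff α p := by
  simp [eff]

@[simp]
theorem eff_singleton (a : A) (p : P) : N.eff {a} p = (N.post a p : ℤ) - N.pre p a := by
  simp [eff]

@[simp]
theorem eff_replicate (k : ℕ) (a : A) (p : P) :
    N.eff (Multiset.replicate k a) p = k * N.eff {a} p := by
  simp [eff]

theorem eff_eq_sum (α : Multiset A) (p : P) : N.eff α p = (α.map (N.eff {·} p)).sum := by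
  simp [eff]

theorem eff_eq (α : Multiset A) (p : P) : N.eff α p = N.POST α p - N.PRE α p := by
  induction α using Multiset.induction with
  | empty => simp [POST]
  | cons a α ih => simp [POST, ih]; ring

theorem cast_fire (h : N.PRE α p ≤ M p) : (N.fire M α p : ℤ) = M p + N.eff α p := by
  rw [eff_eq, fire]; omega

theorem PRE_le_fire_of_PRE_add_le (h : N.PRE (α + β) p ≤ M p) : N.PRE β p ≤ N.fire M α p := by
  rw [PRE_add] at h; rw [fire]; omega

def gain (a : A) (p : P) : ℕ := (N.eff {a} p).toNat

def loss (a : A) (p : P) : ℕ := (-N.eff {a} p).toNat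

theorem sum_gain_sub_sum_loss (α : Multiset A) (p : P) :
    ((α.map (N.gain · p)).sum : ℤ) - (α.map (N.loss · p)).sum = N.eff α p := by
  rw [Nat.cast_multiset_sum, Nat.cast_multiset_sum, Multiset.map_map, Multiset.map_map,
    ← Multiset.sum_map_sub, eff]
  refine congrArg _ (Multiset.map_congr rfl fun a _ => ?_)
  simp only [Function.comp_apply, gain, loss, eff_singleton]
  omega

theorem eff_filter_eff_neg (α : Multiset A) (p : P) :
    N.eff (α.filter (N.eff {·} p < 0)) p = -(α.map (N.loss · p)).sum := by
  induction α using Multiset.induction with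
  | empty => simp
  | cons a α ih =>
    rw [Multiset.filter_cons, Multiset.map_cons, Multiset.sum_cons, Nat.cast_add]
    split_ifs with ha
    · rw [Multiset.singleton_add, eff_cons, ih, loss]; omega
    · rw [zero_add, ih, loss]; omega

def reindex (e : P ≃ Q) : PTNet Q A where
  T := N.T
  pre q a := N.pre (e.symm q) a
  post a q := N.post a (e.symm q)
  M0 := N.M0 ∘ e.symm
  pre_pos a ha := by
    obtain ⟨p, hp⟩ := N.pre_pos a ha
    exact ⟨e p, by simpa using hp⟩

@[simp]
theorem reindex_PRE (e : P ≃ Q) (α : Multiset A) (q : Q) :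
    (N.reindex e).PRE α q = N.PRE α (e.symm q) :=
  rfl

theorem enabled_reindex_iff (e : P ≃ Q) :
    (N.reindex e).Enabled (M ∘ e.symm) α ↔ N.Enabled M α :=
  ⟨fun h => ⟨h.1, fun p => by simpa using h.2 (e p)⟩, fun h => ⟨h.1, fun _ => h.2 _⟩⟩

theorem fire_reindex (e : P ≃ Q) : (N.reindex e).fire (M ∘ e.symm) α = N.fire M α ∘ e.symm :=
  rfl

end PTNet

section MarkingCriterion

variable {S Q A : Type*} (Y : STS S A) (N : PTNet Q A) (f : S → Q → ℕ)

theorem isoSTS_CRG_of_marking (hf : f.Injective) (hinit : f Y.init = N.M0) (hT : Y.T = N.T)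
    (hREA : Y.REA)
    (hfwd : ∀ u γ v, Y.tr u γ v → N.Enabled (f u) γ ∧ f v = N.fire (f u) γ)
    (hbwd : ∀ u γ, N.Enabled (f u) γ → ∃ v, Y.tr u γ v) :
    STS.IsoSTS Y (CRG N) := by
  have reach (s : S) : N.Reach (f s) := by
    induction hREA s with
    | refl => exact hinit ▸ PTNet.Reach.init
    | step _ h ih =>
      obtain ⟨hen, hfire⟩ := hfwd _ _ _ h
      exact hfire ▸ ih.step hen
  have surj {M : Q → ℕ} (hM : N.Reach M) : ∃ s, f s = M := by
    induction hM with
    | init => exact ⟨Y.init, hinit⟩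
    | step _ hen ih =>
      obtain ⟨u, rfl⟩ := ih
      obtain ⟨v, h⟩ := hbwd u _ hen
      exact ⟨v, (hfwd u _ v h).2⟩
  refine ⟨Equiv.ofBijective (fun s => ⟨f s, reach s⟩)
    ⟨fun s s' h => hf (congrArg Subtype.val h),
      fun M => (surj M.2).imp fun s hs => Subtype.ext hs⟩, Subtype.ext hinit, hT,
    fun u γ v => ⟨hfwd u γ v, fun ⟨hen, hfire⟩ => ?_⟩⟩
  obtain ⟨v', h⟩ := hbwd u γ hen
  obtain rfl : v' = v := hf ((hfwd u γ v' h).2.trans hfire.symm)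
  exact h

theorem STSSolvable.of_marking [Fintype Q] (hf : f.Injective) (hinit : f Y.init = N.M0)
    (hT : Y.T = N.T) (hREA : Y.REA)
    (hfwd : ∀ u γ v, Y.tr u γ v → N.Enabled (f u) γ ∧ f v = N.fire (f u) γ)
    (hbwd : ∀ u γ, N.Enabled (f u) γ → ∃ v, Y.tr u γ v) :
    STSSolvable Y := by
  set e := Fintype.equivFin Q
  refine ⟨_, N.reindex e,
    isoSTS_CRG_of_marking Y (N.reindex e) (fun s => f s ∘ e.symm) ?_ ?_ hT hREA ?_ ?_⟩
  · exact fun s s' h => hf (e.symm.surjective.injective_comp_right h)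
  · exact congrArg (· ∘ e.symm) hinit
  · intro u γ v h
    obtain ⟨hen, hfire⟩ := hfwd u γ v h
    exact ⟨(N.enabled_reindex_iff e).2 hen, by rw [hfire, N.fire_reindex]⟩
  · exact fun u γ hen => hbwd u γ ((N.enabled_reindex_iff e).1 hen)

end MarkingCriterion

/-- `lower`, `upper` and `sub` witness `(X^spike)^rev ◁ CRG N`, `CRG N ◁ X^mixrev` and
`X ≅ CRG (N|_T)`. -/
structure MixrevSandwich {S P A : Type*} [DecidableEq A] (X : STS S A) (bar : A → A)
    (N : PTNet P A) where
  labelsIn : X.LabelsIn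
  ce : X.CE
  rea : X.REA
  el : X.EL
  seq : X.SEQ
  goodRev : X.GoodRev bar
  net_T : N.T = X.revT bar
  lower : S ≃ {M : P → ℕ // N.Reach M}
  lower_init : lower X.init = (CRG N).init
  lower_tr : ∀ s α s', (X.spikeR.revSTS bar).tr s α s' → (CRG N).tr (lower s) α (lower s')
  upper : {M : P → ℕ // N.Reach M} ≃ S
  upper_init : upper (CRG N).init = X.init
  upper_tr : ∀ M α M', (CRG N).tr M α M' → (X.mixrevSTS bar).tr (upper M) α (upper M')
  sub : S ≃ {M : P → ℕ // (N.restrict X.T).Reach M}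
  sub_init : sub X.init = (CRG (N.restrict X.T)).init
  sub_tr : ∀ s α s', X.tr s α s' ↔ (CRG (N.restrict X.T)).tr (sub s) α (sub s')

namespace MixrevSandwich

open STS

variable {S P A : Type*} [DecidableEq A] {X : STS S A} {bar : A → A} {N : PTNet P A}
  (H : MixrevSandwich X bar N) {s t t' u v w y z : S} {a b : A} {α β γ : Multiset A}

def marking (s : S) : P → ℕ := (H.sub s).1

theorem marking_injective : Function.Injective H.marking :=
  fun _ _ h => H.sub.injective (Subtype.ext h)

theorem marking_init : H.marking X.init = N.M0 := by
  rw [marking, H.sub_init]; rfl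

theorem PRE_le_marking_of_tr (h : X.tr s γ s') (p : P) : N.PRE γ p ≤ H.marking s p :=
  ((H.sub_tr s γ s').1 h).1.2 p

theorem marking_of_tr (h : X.tr s γ s') (p : P) :
    (H.marking s' p : ℤ) = H.marking s p + N.eff γ p := by
  rw [marking, ((H.sub_tr s γ s').1 h).2]
  exact N.cast_fire (H.PRE_le_marking_of_tr h p)

theorem exists_tr_of_PRE_le (hγ : ∀ a ∈ γ, a ∈ X.T) (h : ∀ p, N.PRE γ p ≤ H.marking s p) :
    ∃ s', X.tr s γ s' := by
  have hen : (N.restrict X.T).Enabled (H.sub s).1 γ :=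
    ⟨fun a ha => Finset.mem_inter.2 ⟨H.net_T ▸ Finset.mem_union_left _ (hγ a ha), hγ a ha⟩, h⟩
  refine ⟨H.sub.symm ⟨_, (H.sub s).2.step hen⟩, (H.sub_tr _ _ _).2 ?_⟩
  rw [Equiv.apply_symm_apply]
  exact ⟨hen, rfl⟩

theorem lower_val (s : S) : (H.lower s).1 = H.marking s := by
  induction s using H.ce.induction_singleton H.seq H.rea with
  | init => rw [H.lower_init, marking_init]; rfl
  | step t a t' ih h =>
    rw [(H.lower_tr t {a} t' (.inl ⟨h, by simp⟩)).2, ih]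
    exact ((H.sub_tr t {a} t').1 h).2.symm

theorem upper_lower (s : S) : H.upper (H.lower s) = s := by
  induction s using H.ce.induction_singleton H.seq H.rea with
  | init => rw [H.lower_init]; exact H.upper_init
  | step t a t' ih h =>
    have hm := H.upper_tr _ _ _ (H.lower_tr t {a} t' (.inl ⟨h, by simp⟩))
    rw [ih] at hm
    have ha : a ∈ X.T := H.labelsIn t {a} t' h a (Multiset.mem_singleton_self a)
    exact H.ce.eq_of_tr_of_tr (tr_of_mixrevSTS_tr_singleton H.labelsIn H.ce H.goodRev ha hm) h

theorem rev_replicate_enabled_fire {k : ℕ} (h : X.tr y (Multiset.replicate k a) z) :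
    (∀ p, k * N.pre p (bar a) ≤ H.marking z p) ∧
      ∀ p, (H.marking y p : ℤ) = H.marking z p + k * N.eff {bar a} p := by
  have hspike : (Multiset.replicate k a).toFinset.card ≤ 1 :=
    Finset.card_le_one.2 fun x hx y hy => by
      rw [Multiset.mem_toFinset, Multiset.mem_replicate] at hx hy
      rw [hx.2, hy.2]
  obtain ⟨⟨-, hpre⟩, hfire⟩ := H.lower_tr z _ y
    (.inr ⟨Multiset.replicate k a, (Multiset.map_replicate bar k a).symm, h, hspike⟩)
  refine ⟨fun p => by simpa [H.lower_val] using hpre p, fun p => ?_⟩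
  rw [← H.lower_val, hfire, N.cast_fire (hpre p), N.eff_replicate, H.lower_val]

theorem eff_bar (H : MixrevSandwich X bar N) (h : X.tr t {a} t') (p : P) :
    N.eff {bar a} p = -N.eff {a} p := by
  have h₁ := H.marking_of_tr h p
  have h₂ := (H.rev_replicate_enabled_fire (k := 1) h).2 p
  push_cast at h₂
  linarith

theorem eff_bar_of_mem (H : MixrevSandwich X bar N) (h : X.tr s α u) (ha : a ∈ α) (p : P) :
    N.eff {bar a} p = -N.eff {a} p :=
  have ⟨_, _, h'⟩ := H.ce.exists_tr_singleton_of_mem H.seq h ha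
  H.eff_bar h' p

/-- `ā` fired in `N` from `lower u` is, through `upper`, a mixed-reverse step out of `u`. -/
theorem exists_tr_singleton_of_pre_bar_le (ha : a ∈ X.T)
    (h : ∀ p, N.pre p (bar a) ≤ H.marking u p) : ∃ t, X.tr t {a} u := by
  have hen : N.Enabled (H.lower u).1 {bar a} := by
    refine ⟨fun x hx => ?_, fun p => by simpa [H.lower_val] using h p⟩
    rw [Multiset.mem_singleton.1 hx, H.net_T]
    exact Finset.mem_union_right _ (Finset.mem_image_of_mem bar ha)
  have hm := H.upper_tr (H.lower u) {bar a} ⟨_, (H.lower u).2.step hen⟩ ⟨hen, rfl⟩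
  rw [H.upper_lower] at hm
  exact exists_tr_singleton_of_mixrevSTS_tr_bar H.labelsIn H.goodRev ha hm

noncomputable def solvingNet : PTNet (P ⊕ P × X.T) A where
  T := X.revT bar
  pre
    | .inl p, x => if x ∈ X.T then N.pre p x else N.post (X.unbar bar x) p
    | .inr (p, a), x =>
      if x = bar a then N.pre p x else if x ∈ X.T then N.loss x p else N.gain (X.unbar bar x) p
  post
    | x, .inl p => if x ∈ X.T then N.post x p else N.pre p (X.unbar bar x)
    | x, .inr (p, a) =>
      if x = bar a then N.post x p else if x ∈ X.T then N.gain x p else N.loss (X.unbar bar x) p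
  M0 q := N.M0 (Sum.elim id Prod.fst q)
  pre_pos x hx := by
    by_cases hxT : x ∈ X.T
    · obtain ⟨p, hp⟩ := N.pre_pos x (H.net_T ▸ Finset.mem_union_left _ hxT)
      exact ⟨.inl p, by simpa [hxT] using hp⟩
    · obtain ⟨a, ha, rfl⟩ := Finset.mem_image.1 ((Finset.mem_union.1 hx).resolve_left hxT)
      obtain ⟨p, hp⟩ := N.pre_pos (bar a)
        (H.net_T ▸ Finset.mem_union_right _ (Finset.mem_image_of_mem bar ha))
      exact ⟨.inr (p, ⟨a, ha⟩), by simpa using hp⟩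

def solvingMarking (s : S) (q : P ⊕ P × X.T) : ℕ := H.marking s (Sum.elim id Prod.fst q)

theorem solvingNet_pre_inl (p : P) (hb : b ∈ X.T) : H.solvingNet.pre (.inl p) b = N.pre p b := by
  simp [solvingNet, hb]

theorem solvingNet_pre_inl_bar (p : P) (hb : b ∈ X.T) :
    H.solvingNet.pre (.inl p) (bar b) = N.post b p := by
  simp [solvingNet, H.goodRev.2 b hb, unbar_bar H.goodRev.1 hb]

theorem solvingNet_pre_inr (p : P) (a : X.T) (hb : b ∈ X.T) :
    H.solvingNet.pre (.inr (p, a)) b = N.loss b p := by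
  simp [solvingNet, hb, H.goodRev.ne_bar hb a.2]

theorem solvingNet_pre_inr_bar (p : P) (a : X.T) (hb : b ∈ X.T) :
    H.solvingNet.pre (.inr (p, a)) (bar b) = if b = a then N.pre p (bar a) else N.gain b p := by
  simp [solvingNet, H.goodRev.1.eq_iff hb a.2, H.goodRev.2 b hb, unbar_bar H.goodRev.1 hb]
  split_ifs with h <;> simp [h]

theorem solvingNet_eff_singleton (hb : b ∈ X.T) (q : P ⊕ P × X.T) :
    H.solvingNet.eff {b} q = N.eff {b} (Sum.elim id Prod.fst q) := by
  rcases q with p | ⟨p, a⟩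
  · simp [solvingNet, hb]
  · simp [solvingNet, hb, H.goodRev.ne_bar hb a.2, PTNet.gain, PTNet.loss]; omega

theorem solvingNet_eff_singleton_bar (hb : b ∈ X.T) (hbar : ∀ p, N.eff {bar b} p = -N.eff {b} p)
    (q : P ⊕ P × X.T) : H.solvingNet.eff {bar b} q = -N.eff {b} (Sum.elim id Prod.fst q) := by
  rcases q with p | ⟨p, a⟩
  · simp [solvingNet, H.goodRev.2 b hb, unbar_bar H.goodRev.1 hb]
  · by_cases hba : b = a
    · subst hba; simpa [solvingNet] using hbar p
    · simp [solvingNet, H.goodRev.1.eq_iff hb a.2, hba, H.goodRev.2 b hb,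
        unbar_bar H.goodRev.1 hb, PTNet.gain, PTNet.loss]
      omega

theorem solvingNet_PRE_inl (p : P) (hα : ∀ b ∈ α, b ∈ X.T) (hβ : ∀ b ∈ β, b ∈ X.T) :
    H.solvingNet.PRE (α.map bar + β) (.inl p) = N.POST α p + N.PRE β p := by
  simp only [PTNet.PRE, PTNet.POST, Multiset.map_add, Multiset.sum_add, Multiset.map_map]
  congr 1
  · exact congrArg _ (Multiset.map_congr rfl fun b hb => H.solvingNet_pre_inl_bar p (hα b hb))
  · exact congrArg _ (Multiset.map_congr rfl fun b hb => H.solvingNet_pre_inl p (hβ b hb))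

theorem solvingNet_PRE_inr (p : P) (a : X.T) {k : ℕ} {α₀ : Multiset A} (ha : (a : A) ∉ α₀)
    (hα₀ : ∀ b ∈ α₀, b ∈ X.T) (hβ : ∀ b ∈ β, b ∈ X.T) :
    H.solvingNet.PRE ((Multiset.replicate k (a : A) + α₀).map bar + β) (.inr (p, a)) =
      k * N.pre p (bar a) + (α₀.map (N.gain · p)).sum + (β.map (N.loss · p)).sum := by
  simp only [PTNet.PRE, Multiset.map_add, Multiset.sum_add, Multiset.map_map,
    Multiset.map_replicate, Multiset.sum_replicate, Function.comp_apply,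
    H.solvingNet_pre_inr_bar p a a.2, if_pos, smul_eq_mul]
  congr 2
  · exact congrArg _ (Multiset.map_congr rfl fun b hb =>
      (H.solvingNet_pre_inr_bar p a (hα₀ b hb)).trans (if_neg (ne_of_mem_of_not_mem hb ha)))
  · exact Multiset.map_congr rfl fun b hb => H.solvingNet_pre_inr p a (hβ b hb)

theorem solvingNet_eff (hα : ∀ b ∈ α, b ∈ X.T ∧ ∀ p, N.eff {bar b} p = -N.eff {b} p)
    (hβ : ∀ b ∈ β, b ∈ X.T) (q : P ⊕ P × X.T) :
    H.solvingNet.eff (α.map bar + β) q =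
      N.eff β (Sum.elim id Prod.fst q) - N.eff α (Sum.elim id Prod.fst q) := by
  have hbar : (α.map (H.solvingNet.eff {bar ·} q)).sum =
      -(α.map (N.eff {·} (Sum.elim id Prod.fst q))).sum := by
    rw [← Multiset.sum_map_neg]
    exact congrArg _ (Multiset.map_congr rfl fun b hb =>
      H.solvingNet_eff_singleton_bar (hα b hb).1 (hα b hb).2 q)
  have hfwd : (β.map (H.solvingNet.eff {·} q)).sum =
      (β.map (N.eff {·} (Sum.elim id Prod.fst q))).sum :=
    congrArg _ (Multiset.map_congr rfl fun b hb => H.solvingNet_eff_singleton (hβ b hb) q)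
  rw [PTNet.eff_add, PTNet.eff_eq_sum, PTNet.eff_eq_sum _ β, N.eff_eq_sum β, N.eff_eq_sum α,
    Multiset.map_map, Function.comp_def, hbar, hfwd]
  ring

/-- Run first the actions of `α₀ + β` that lose tokens on `p`, then the spike `a^k`: the spike
can be reversed at the state reached, whose marking on `p` is that of `u` minus the gains of
`α₀` and the losses of `β`. -/
theorem pre_bar_add_gain_add_loss_le_marking {k : ℕ} {α₀ : Multiset A} (p : P)
    (hw : X.tr s (Multiset.replicate k a + α₀ + β) w)
    (hα : X.tr s (Multiset.replicate k a + α₀) u) :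
    k * N.pre p (bar a) + (α₀.map (N.gain · p)).sum + (β.map (N.loss · p)).sum ≤
      H.marking u p := by
  set δ := (α₀ + β).filter (N.eff {·} p < 0)
  obtain ⟨ρ, hρ⟩ :=
    Multiset.le_iff_exists_add.1 (Multiset.filter_le (N.eff {·} p < 0) (α₀ + β))
  have hsplit : Multiset.replicate k a + α₀ + β = δ + (Multiset.replicate k a + ρ) := by
    rw [add_assoc, hρ, add_left_comm]
  obtain ⟨y, hsy, hyw⟩ := H.ce.split H.seq (hsplit ▸ hw)
  obtain ⟨z, hyz, -⟩ := H.ce.split H.seq hyw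
  obtain ⟨hpre, -⟩ := H.rev_replicate_enabled_fire hyz
  have hy := H.marking_of_tr hsy p
  have hz := H.marking_of_tr hyz p
  have hu := H.marking_of_tr hα p
  rw [N.eff_filter_eff_neg, Multiset.map_add, Multiset.sum_add, Nat.cast_add] at hy
  rw [N.eff_add, N.eff_replicate, ← N.sum_gain_sub_sum_loss α₀ p] at hu
  rw [N.eff_replicate] at hz
  have hzp : (k : ℤ) * N.pre p (bar a) ≤ H.marking z p := by exact_mod_cast hpre p
  suffices (k : ℤ) * N.pre p (bar a) + ((α₀.map (N.gain · p)).sum : ℕ) +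
      ((β.map (N.loss · p)).sum : ℕ) ≤ H.marking u p by exact_mod_cast this
  linarith

theorem solvingNet_PRE_le (hw : X.tr s (α + β) w) (hα : X.tr s α u) (hβ : X.tr s β v)
    (q : P ⊕ P × X.T) : H.solvingNet.PRE (α.map bar + β) q ≤ H.solvingMarking u q := by
  have hαT := H.labelsIn s α u hα
  have hβT := H.labelsIn s β v hβ
  rcases q with p | ⟨p, a⟩
  · rw [H.solvingNet_PRE_inl p hαT hβT]
    have hu := H.marking_of_tr hα p
    have hs := H.PRE_le_marking_of_tr hw p
    rw [N.eff_eq] at hu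
    rw [N.PRE_add] at hs
    change _ ≤ H.marking u p
    omega
  · obtain ⟨k, α₀, ha, rfl⟩ : ∃ k α₀, (a : A) ∉ α₀ ∧ Multiset.replicate k (a : A) + α₀ = α :=
      ⟨_, α.filter (· ≠ (a : A)), by simp, by rw [← Multiset.filter_eq', Multiset.filter_add_not]⟩
    rw [H.solvingNet_PRE_inr p a ha (fun b hb => hαT b (Multiset.mem_add.2 (.inr hb))) hβT]
    exact H.pre_bar_add_gain_add_loss_le_marking p hw hα

theorem solvingNet_fire_of_mixrevSTS_tr (h : (X.mixrevSTS bar).tr u γ v) :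
    H.solvingNet.Enabled (H.solvingMarking u) γ ∧
      H.solvingMarking v = H.solvingNet.fire (H.solvingMarking u) γ := by
  obtain ⟨s, α, β, rfl, ⟨w, hw⟩, hα, hβ⟩ := h
  have hαT := H.labelsIn s α u hα
  have hβT := H.labelsIn s β v hβ
  have hlabels : ∀ x ∈ α.map bar + β, x ∈ X.revT bar := by
    simp only [Multiset.mem_add, Multiset.mem_map]
    rintro x (⟨b, hb, rfl⟩ | hx)
    · exact Finset.mem_union_right _ (Finset.mem_image_of_mem bar (hαT b hb))
    · exact Finset.mem_union_left _ (hβT x hx)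
  have hpre := H.solvingNet_PRE_le hw hα hβ
  refine ⟨⟨hlabels, hpre⟩, funext fun q => ?_⟩
  have heff := H.solvingNet_eff (α := α) (β := β)
    (fun b hb => ⟨hαT b hb, H.eff_bar_of_mem hα hb⟩) hβT q
  have hu := H.marking_of_tr hα (Sum.elim id Prod.fst q)
  have hv := H.marking_of_tr hβ (Sum.elim id Prod.fst q)
  have hfire := H.solvingNet.cast_fire (hpre q)
  simp only [solvingMarking] at hfire ⊢
  omega

theorem exists_marking_eq_sub_eff (α : Multiset A) (hα : ∀ b ∈ α, b ∈ X.T) (u : S)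
    (hen : ∀ q, H.solvingNet.PRE (α.map bar) q ≤ H.solvingMarking u q) :
    ∃ s, ∀ p, (H.marking s p : ℤ) = H.marking u p - N.eff α p := by
  induction α using Multiset.induction generalizing u with
  | empty => exact ⟨u, by simp⟩
  | cons a α ih =>
    have ha := hα a (Multiset.mem_cons_self a α)
    rw [Multiset.map_cons, ← Multiset.singleton_add] at hen
    have hen_bar (q : P ⊕ P × X.T) : H.solvingNet.PRE {bar a} q ≤ H.solvingMarking u q :=
      le_trans (by rw [PTNet.PRE_add]; exact Nat.le_add_right _ _) (hen q)
    obtain ⟨t, ht⟩ := H.exists_tr_singleton_of_pre_bar_le ha fun p => by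
      simpa [H.solvingNet_pre_inr_bar p ⟨a, ha⟩ ha, solvingMarking] using
        hen_bar (.inr (p, ⟨a, ha⟩))
    have hfire (q : P ⊕ P × X.T) :
        (H.solvingNet.fire (H.solvingMarking u) {bar a} q : ℤ) = H.solvingMarking t q := by
      rw [H.solvingNet.cast_fire (hen_bar q), H.solvingNet_eff_singleton_bar ha (H.eff_bar ht),
        solvingMarking, solvingMarking, H.marking_of_tr ht]
      ring
    obtain ⟨s, hs⟩ := ih (fun b hb => hα b (Multiset.mem_cons_of_mem hb)) t fun q => by
      have := H.solvingNet.PRE_le_fire_of_PRE_add_le (hen q)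
      exact_mod_cast (Nat.cast_le.2 this).trans (hfire q).le
    refine ⟨s, fun p => ?_⟩
    rw [hs, H.marking_of_tr ht, PTNet.eff_cons]
    ring

theorem exists_mixrevSTS_tr_of_enabled (hen : H.solvingNet.Enabled (H.solvingMarking u) γ) :
    ∃ v, (X.mixrevSTS bar).tr u γ v := by
  obtain ⟨α, β, rfl, hαT, hβT⟩ := exists_eq_map_bar_add hen.1
  obtain ⟨s, hs⟩ := H.exists_marking_eq_sub_eff α hαT u fun q =>
    le_trans (by rw [PTNet.PRE_add]; exact Nat.le_add_right _ _) (hen.2 q)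
  have hlabels : ∀ b ∈ α + β, b ∈ X.T := by
    rintro b hb
    exact (Multiset.mem_add.1 hb).elim (hαT b) (hβT b)
  obtain ⟨w, hw⟩ := H.exists_tr_of_PRE_le (s := s) hlabels fun p => by
    have hu := hen.2 (.inl p)
    rw [H.solvingNet_PRE_inl p hαT hβT] at hu
    change _ ≤ H.marking u p at hu
    have := hs p
    rw [N.eff_eq] at this
    rw [N.PRE_add]
    omega
  obtain ⟨u', hsu', -⟩ := H.ce.split H.seq hw
  obtain rfl : u' = u := H.marking_injective <| funext fun p => by
    have := H.marking_of_tr hsu' p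
    have := hs p
    omega
  obtain ⟨v, hsv, -⟩ := H.ce.split H.seq (add_comm α β ▸ hw)
  exact ⟨v, s, α, β, rfl, ⟨w, hw⟩, hsu', hsv⟩

theorem stsSolvable_mixrevSTS [Fintype P] (H : MixrevSandwich X bar N) :
    STSSolvable (X.mixrevSTS bar) :=
  STSSolvable.of_marking _ H.solvingNet H.solvingMarking
    (fun _ _ h => H.marking_injective (funext fun p => congrFun h (.inl p)))
    (funext fun _ => congrFun H.marking_init _) rfl
    (mixrevSTS_REA H.rea H.el) (fun _ _ _ => H.solvingNet_fire_of_mixrevSTS_tr)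
    (fun _ _ => H.exists_mixrevSTS_tr_of_enabled)

end MixrevSandwich

/-- If some PT-net over `T ⊎ T̄` over-approximates `(TS^spike)^rev`,
under-approximates `TS^mixrev`, and restricts to a solution of `TS`, then
`TS^mixrev` is solvable. -/
theorem stmt15 {S A : Type*} [DecidableEq A] (X : STS S A) (bar : A → A)
    (hX : X.IsCEST) (hg : X.GoodRev bar)
    (n : ℕ) (N : PTNet (Fin n) A) (hT : N.T = X.revT bar)
    (h1 : STS.Incl ((X.spikeR).revSTS bar) (CRG N))
    (h2 : STS.Incl (CRG N) (X.mixrevSTS bar))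
    (h3 : STS.IsoSTS X (CRG (N.restrict X.T))) :
    STSSolvable (X.mixrevSTS bar) := by
  obtain ⟨hLab, hCE, hREA, hEL, hSEQ⟩ := hX
  obtain ⟨lower, lower_init, -, lower_tr⟩ := h1
  obtain ⟨upper, upper_init, -, upper_tr⟩ := h2
  obtain ⟨sub, sub_init, -, sub_tr⟩ := h3
  exact MixrevSandwich.stsSolvable_mixrevSTS ⟨hLab, hCE, hREA, hEL, hSEQ, hg, hT,
    lower, lower_init, lower_tr, upper, upper_init, upper_tr, sub, sub_init, sub_tr⟩
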